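/- arXiv:2410.09180 — 7 statements merged into one kernel-verified Lean document; each statement's English description precedes it below -/
import Mathlib

section
/- Let b : R → (−1,1) be increasing and L-Lipschitz, K > 0, and define for distinct indices i, j ∈ {1,…,N} and s ∈ [−1,1] the map E(x) = x + K(s − b(x^i − x^j))(e_i − e_j), where e_i is the i-th standard basis vector. Then for all x, y ∈ R^N: ‖E(x) − E(y)‖² − ‖x − y‖² ≤ −2K(1 − KL)·|x^i − x^j − y^i + y^j|·|b(x^i − x^j) − b(y^i − y^j)|. -/
/-!
Write `d = (xⁱ - xʲ) - (yⁱ - yʲ)` and `β = b(xⁱ - xʲ) - b(yⁱ - yʲ)`. Then `E x - E y` is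
`(x - y) - Kβ (eᵢ - eⱼ)`, and since `⟪x - y, eᵢ - eⱼ⟫ = d` and `‖eᵢ - eⱼ‖² = 2`,
`‖E x - E y‖² - ‖x - y‖² = -2Kβd + 2K²β²`. Monotonicity of `b` gives `βd = |β||d|`, and the
Lipschitz bound gives `β² ≤ L|d||β|`.
-/

theorem Monotone.sub_mul_sub_nonneg {R : Type*} [Ring R] [LinearOrder R] [IsOrderedRing R]
    {f : R → R} (hf : Monotone f) (a b : R) :
    0 ≤ (f a - f b) * (a - b) := by
  rcases le_total a b with hab | hba
  · exact mul_nonneg_of_nonpos_of_nonpos (sub_nonpos.2 (hf hab)) (sub_nonpos.2 hab)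
  · exact mul_nonneg (sub_nonneg.2 (hf hba)) (sub_nonneg.2 hba)

namespace EuclideanSpace

variable {ι : Type*} [Fintype ι] [DecidableEq ι]

theorem inner_single_sub_single_right (z : EuclideanSpace ℝ ι) (i j : ι) :
    inner ℝ z (single i (1 : ℝ) - single j 1) = z i - z j := by
  simp [inner_sub_right, inner_single_right]

theorem norm_single_sub_single_sq {i j : ι} (hij : i ≠ j) :
    ‖single i (1 : ℝ) - single j 1‖ ^ 2 = 2 := by
  rw [← real_inner_self_eq_norm_sq, inner_single_sub_single_right]
  simp [hij, hij.symm]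
  norm_num

end EuclideanSpace

theorem neg_two_mul_add_two_sq_mul_le {d β K L : ℝ} (hsign : 0 ≤ β * d) (hlip : |β| ≤ L * |d|) :
    -2 * K * (β * d) + 2 * K ^ 2 * β ^ 2 ≤ -2 * K * (1 - K * L) * |d| * |β| := by
  have hprod : β * d = |d| * |β| := by rw [← abs_mul, mul_comm d, abs_of_nonneg hsign]
  have hsq : β ^ 2 ≤ L * |d| * |β| := by
    rw [← sq_abs]; nlinarith [abs_nonneg β]
  rw [hprod]
  nlinarith [mul_le_mul_of_nonneg_left hsq (sq_nonneg K)]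

theorem stmt_2_general (N : ℕ) (i j : Fin N) (hij : i ≠ j)
    (s : ℝ)
    (b : ℝ → ℝ) (hb_mono : StrictMono b)
    (L : ℝ) (hb_lip : ∀ u v, |b u - b v| ≤ L * |u - v|)
    (K : ℝ)
    (E : EuclideanSpace ℝ (Fin N) → EuclideanSpace ℝ (Fin N))
    (hE : ∀ x, E x = x + (K * (s - b (x i - x j))) •
      (EuclideanSpace.single i (1 : ℝ) - EuclideanSpace.single j (1 : ℝ))) :
    ∀ x y : EuclideanSpace ℝ (Fin N),
      ‖E x - E y‖ ^ 2 - ‖x - y‖ ^ 2 ≤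
        -2 * K * (1 - K * L) * |x i - x j - y i + y j| *
          |b (x i - x j) - b (y i - y j)| := by
  intro x y
  set w := EuclideanSpace.single i (1 : ℝ) - EuclideanSpace.single j (1 : ℝ)
  set d := (x i - x j) - (y i - y j)
  set β := b (x i - x j) - b (y i - y j)
  have hdiff : E x - E y = (x - y) + (-(K * β)) • w := by
    rw [hE x, hE y]; module
  have hexpand : ‖E x - E y‖ ^ 2 - ‖x - y‖ ^ 2 = -2 * K * (β * d) + 2 * K ^ 2 * β ^ 2 := by
    rw [hdiff, norm_add_sq_real, inner_smul_right, EuclideanSpace.inner_single_sub_single_right,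
      norm_smul, mul_pow, EuclideanSpace.norm_single_sub_single_sq hij, Real.norm_eq_abs, sq_abs]
    simp only [PiLp.sub_apply, d]
    ring
  rw [hexpand, show x i - x j - y i + y j = d by ring]
  exact neg_two_mul_add_two_sq_mul_le (hb_mono.monotone.sub_mul_sub_nonneg _ _) (hb_lip _ _)

theorem stmt_2 (N : ℕ) (hN : 2 ≤ N) (i j : Fin N) (hij : i ≠ j)
    (s : ℝ) (hs : s ∈ Set.Icc (-1 : ℝ) 1)
    (b : ℝ → ℝ) (hb_mono : StrictMono b)
    (hb_range : ∀ u, b u ∈ Set.Ioo (-1 : ℝ) 1)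
    (L : ℝ) (hL : 0 ≤ L) (hb_lip : ∀ u v, |b u - b v| ≤ L * |u - v|)
    (K : ℝ) (hK : 0 < K)
    (E : EuclideanSpace ℝ (Fin N) → EuclideanSpace ℝ (Fin N))
    (hE : ∀ x, E x = x + (K * (s - b (x i - x j))) •
      (EuclideanSpace.single i (1 : ℝ) - EuclideanSpace.single j (1 : ℝ))) :
    ∀ x y : EuclideanSpace ℝ (Fin N),
      ‖E x - E y‖ ^ 2 - ‖x - y‖ ^ 2 ≤
        -2 * K * (1 - K * L) * |x i - x j - y i + y j| *
          |b (x i - x j) - b (y i - y j)| :=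
  stmt_2_general N i j hij s b hb_mono L hb_lip K E hE
end

section
/- Let b : R → (−1,1) be strictly increasing, L-Lipschitz with KL < 1/2 (more generally 1 − 2KL > −1), and suppose that for every M > 0, ℓ_M := inf_{−M ≤ v < u ≤ M} (b(u) − b(v))/(u − v) > 0. Define E₊(u) = u + K(1 − b(2u)) and E₋(u) = u + K(−1 − b(2u)). Then for any bounded nonempty open interval I there exists η > 0 such that for all u, v ∈ I: |E₊⁻¹(u) − E₊⁻¹(v)| ≥ (1 + η)|u − v| and |E₋⁻¹(u) − E₋⁻¹(v)| ≥ (1 + η)|u − v|. -/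
theorem stmt_6 (b : ℝ → ℝ) (hb_mono : StrictMono b)
    (hb_range : ∀ u, b u ∈ Set.Ioo (-1 : ℝ) 1)
    (L : ℝ) (hL : 0 ≤ L) (hb_lip : ∀ u v, |b u - b v| ≤ L * |u - v|)
    (K : ℝ) (hK : 0 < K) (hKL : 1 - 2 * K * L > -1)
    (ℓ : ℝ → ℝ) (hℓ_pos : ∀ M > 0, 0 < ℓ M)
    (hℓ_low : ∀ M > 0, ∀ u ∈ Set.Icc (-M) M, ∀ v ∈ Set.Icc (-M) M,
      ℓ M * |u - v| ≤ |b u - b v|)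
    (Ep Em : ℝ → ℝ)
    (hEp : ∀ u, Ep u = u + K * (1 - b (2 * u)))
    (hEm : ∀ u, Em u = u + K * (-1 - b (2 * u)))
    (a c : ℝ) (hac : a < c) :
    ∃ η > 0, ∀ u ∈ Set.Ioo a c, ∀ v ∈ Set.Ioo a c,
      (1 + η) * |u - v| ≤ |Function.invFun Ep u - Function.invFun Ep v| ∧
      (1 + η) * |u - v| ≤ |Function.invFun Em u - Function.invFun Em v| := by
  -- continuity of b
  have hb_cont : Continuous b := by
    have hlw : LipschitzWith (Real.toNNReal L) b := by
      apply LipschitzWith.of_dist_le_mul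
      intro x y
      rw [Real.dist_eq, Real.dist_eq, Real.coe_toNNReal L hL]
      exact hb_lip x y
    exact hlw.continuous
  -- the big interval
  set M : ℝ := 2 * (|a| + |c| + 2 * K) + 1 with hMdef
  have hM0 : 0 < M := by positivity
  have hℓM : 0 < ℓ M := hℓ_pos M hM0
  -- ℓ M ≤ L
  have hℓL : ℓ M ≤ L := by
    have h1 : (0:ℝ) ∈ Set.Icc (-M) M := by constructor <;> linarith
    have h2 : M ∈ Set.Icc (-M) M := by constructor <;> linarith
    have := hℓ_low M hM0 0 h1 M h2
    have h3 := hb_lip 0 M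
    have hMabs : |(0:ℝ) - M| = M := by rw [abs_sub_comm]; simp [abs_of_pos hM0]
    rw [hMabs] at this h3
    nlinarith
  set r : ℝ := max (1 - 2 * K * ℓ M) (2 * K * L - 1) with hrdef
  have hr1 : r < 1 := by
    apply max_lt
    · nlinarith
    · linarith
  set r' : ℝ := max r (1/2) with hr'def
  have hr'0 : (0:ℝ) < r' := lt_of_lt_of_le (by norm_num) (le_max_right _ _)
  have hr'1 : r' < 1 := max_lt hr1 (by norm_num)
  -- key contraction estimate
  have key : ∀ x y : ℝ, |2 * x| ≤ M → |2 * y| ≤ M →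
      |(x - K * b (2 * x)) - (y - K * b (2 * y))| ≤ r * |x - y| := by
    intro x y hx hy
    wlog h : y ≤ x generalizing x y
    · have := this y x hy hx (le_of_not_ge h)
      rwa [abs_sub_comm, abs_sub_comm y x] at this
    have hxI : (2 * x) ∈ Set.Icc (-M) M := abs_le.mp hx
    have hyI : (2 * y) ∈ Set.Icc (-M) M := abs_le.mp hy
    have hb1 := hℓ_low M hM0 (2 * x) hxI (2 * y) hyI
    have hb2 := hb_lip (2 * x) (2 * y)
    have hbb : b (2 * y) ≤ b (2 * x) := hb_mono.le_iff_le.mpr (by linarith)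
    rw [abs_of_nonneg (by linarith : (0:ℝ) ≤ 2 * x - 2 * y),
      abs_of_nonneg (by linarith : (0:ℝ) ≤ b (2 * x) - b (2 * y))] at hb1 hb2
    rw [abs_of_nonneg (by linarith : (0:ℝ) ≤ x - y), abs_le]
    constructor
    · have hh : 2 * K * L - 1 ≤ r := le_max_right _ _
      nlinarith
    · have hh : 1 - 2 * K * ℓ M ≤ r := le_max_left _ _
      nlinarith
  -- generic treatment of Ep and Em
  have main : ∀ (f : ℝ → ℝ) (c0 : ℝ), -1 ≤ c0 → c0 ≤ 1 →
      (∀ u, f u = u + K * (c0 - b (2 * u))) →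
      ∀ u ∈ Set.Ioo a c, ∀ v ∈ Set.Ioo a c,
        |u - v| ≤ r' * |Function.invFun f u - Function.invFun f v| := by
    intro f c0 hc0l hc0r hf u hu v hv
    have hf_cont : Continuous f := by
      have : f = fun u => u + K * (c0 - b (2 * u)) := funext hf
      rw [this]
      exact (continuous_id.add (continuous_const.mul
        (continuous_const.sub (hb_cont.comp (continuous_const.mul continuous_id)))))
    have hf_surj : Function.Surjective f := by
      intro t
      have h1 : f (t - 2 * K) ≤ t := by
        have := (hb_range (2 * (t - 2 * K))).1
        rw [hf]; nlinarith
      have h2 : t ≤ f (t + 2 * K) := by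
        have := (hb_range (2 * (t + 2 * K))).2
        rw [hf]; nlinarith
      obtain ⟨x, _, hx⟩ := intermediate_value_Icc
        (by linarith : t - 2 * K ≤ t + 2 * K) hf_cont.continuousOn ⟨h1, h2⟩
      exact ⟨x, hx⟩
    have hri := Function.rightInverse_invFun hf_surj
    -- bounds for preimages of points in (a,c)
    have hbound : ∀ w ∈ Set.Ioo a c, |2 * Function.invFun f w| ≤ M := by
      intro w hw
      set x := Function.invFun f w with hxdef
      have hfx : f x = w := hri w
      have hrange := hb_range (2 * x)
      have h1 : w - 2 * K ≤ x := by
        rw [hf] at hfx; nlinarith [hrange.1]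
      have h2 : x ≤ w + 2 * K := by
        rw [hf] at hfx; nlinarith [hrange.2]
      have ha1 : a ≤ |a| := le_abs_self a
      have ha2 : -|a| ≤ a := neg_abs_le a
      have hc1 : c ≤ |c| := le_abs_self c
      have hc2 : -|c| ≤ c := neg_abs_le c
      rw [abs_le]
      constructor <;> [nlinarith [hw.1]; nlinarith [hw.2]]
    set x := Function.invFun f u with hxdef
    set y := Function.invFun f v with hydef
    have hfx : f x = u := hri u
    have hfy : f y = v := hri v
    have hk := key x y (hbound u hu) (hbound v hv)
    have huv : u - v = (x - K * b (2 * x)) - (y - K * b (2 * y)) := by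
      rw [← hfx, ← hfy, hf, hf]; ring
    rw [huv]
    calc |(x - K * b (2 * x)) - (y - K * b (2 * y))| ≤ r * |x - y| := hk
      _ ≤ r' * |x - y| := by
          apply mul_le_mul_of_nonneg_right (le_max_left _ _) (abs_nonneg _)
  refine ⟨1 / r' - 1, by have := one_lt_one_div hr'0 hr'1; linarith, ?_⟩
  intro u hu v hv
  have h1 := main Ep 1 (by norm_num) le_rfl hEp u hu v hv
  have h2 := main Em (-1) le_rfl (by norm_num) hEm u hu v hv
  have heq : (1 + (1 / r' - 1)) = 1 / r' := by ring
  constructor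
  · rw [heq, div_mul_eq_mul_div, one_mul, div_le_iff₀ hr'0]
    nlinarith
  · rw [heq, div_mul_eq_mul_div, one_mul, div_le_iff₀ hr'0]
    nlinarith
end

section
/- Under the assumptions on b and K ensuring E₊ and E₋ are increasing bijections of R with bounded jump at most 2K each (as in the Elo model with binary scores for N = 2 players), for any real numbers a < b and any u ∈ R there exist t ∈ N and a composition β = E_t ∘ ⋯ ∘ E_1, where each E_k ∈ {E₋, E₊}, such that β(u) ∈ (a, b). -/
/-! Write `E_σ u = u + K (σ - b (2u))`, so that `E₊` and `E₋` are the map `g u = u - K b (2u)`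
shifted by `±K`. On a bounded interval `g` has slopes in `[1 - 2KL, 1 - 2Kℓ]`, hence is a
contraction with some factor `q < 1`. Pulling a ball around a point of `(a, c)` back through `E₊`
(when its centre lies to the right of that point) or through `E₋` (otherwise) divides the radius
by `q` and keeps the centre within `2K` of the point; after finitely many steps the set of points
that some composition sends into `(a, c)` contains an interval of length `2K`. Every point reaches
such an interval: to its left `E₊` moves points right by a uniform amount but by less than `2K`,
and symmetrically for `E₋`. -/

open Set Metric

theorem abs_sub_sub_sub_le_of_slope_bounds {f : ℝ → ℝ} {s : Set ℝ} {m M : ℝ}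
    (hf : ∀ x ∈ s, ∀ y ∈ s, y ≤ x → m * (x - y) ≤ f x - f y ∧ f x - f y ≤ M * (x - y))
    {x y : ℝ} (hx : x ∈ s) (hy : y ∈ s) :
    |(x - f x) - (y - f y)| ≤ max (1 - m) (M - 1) * |x - y| := by
  wlog hyx : y ≤ x generalizing x y
  · rw [abs_sub_comm, abs_sub_comm x]
    exact this hy hx (le_of_not_ge hyx)
  obtain ⟨hlow, hup⟩ := hf x hx y hy hyx
  have hm : (1 - m) * (x - y) ≤ max (1 - m) (M - 1) * (x - y) :=
    mul_le_mul_of_nonneg_right (le_max_left _ _) (sub_nonneg.2 hyx)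
  have hM : (M - 1) * (x - y) ≤ max (1 - m) (M - 1) * (x - y) :=
    mul_le_mul_of_nonneg_right (le_max_right _ _) (sub_nonneg.2 hyx)
  rw [abs_of_nonneg (sub_nonneg.2 hyx), abs_le]
  constructor <;> linarith

theorem eq_univ_of_Ioo_subset_of_steps {f g : ℝ → ℝ} {d lo hi : ℝ} {H : Set ℝ}
    (hf_anti : Antitone fun x => f x - x) (hg_anti : Antitone fun x => g x - x)
    (hf : ∀ x, x < f x ∧ f x < x + d) (hg : ∀ x, x - d < g x ∧ g x < x)
    (hlohi : lo + d ≤ hi) (hIoo : Ioo lo hi ⊆ H)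
    (hHf : ∀ x, f x ∈ H → x ∈ H) (hHg : ∀ x, g x ∈ H → x ∈ H) : H = univ := by
  set δ := min (f lo - lo) (hi - g hi)
  have hδ : 0 < δ := lt_min (by linarith [(hf lo).1]) (by linarith [(hg hi).2])
  have hδf : δ ≤ f lo - lo := min_le_left _ _
  have hδg : δ ≤ hi - g hi := min_le_right _ _
  have hwide : ∀ n : ℕ, Ioo (lo - n * δ) (hi + n * δ) ⊆ H := by
    intro n
    induction n with
    | zero => simpa using hIoo
    | succ n ih =>
      rintro x ⟨hx₁, hx₂⟩
      push_cast at hx₁ hx₂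
      have hnδ : 0 ≤ (n : ℝ) * δ := by positivity
      rcases le_or_gt x lo with hxlo | hxlo
      · have hfx : f lo - lo ≤ f x - x := hf_anti hxlo
        exact hHf x (ih ⟨by linarith, by linarith [(hf x).2]⟩)
      rcases le_or_gt hi x with hxhi | hxhi
      · have hgx : g x - x ≤ g hi - hi := hg_anti hxhi
        exact hHg x (ih ⟨by linarith [(hg x).1], by linarith⟩)
      exact hIoo ⟨hxlo, hxhi⟩
  refine eq_univ_of_forall fun x => ?_
  obtain ⟨n, hn⟩ := exists_nat_gt (max (lo - x) (x - hi) / δ)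
  rw [div_lt_iff₀ hδ, max_lt_iff] at hn
  exact hwide n ⟨by linarith, by linarith⟩

/-- The centres of the pulled-back balls stay within `2K` of `t₀` and their radii stay at most
`K`, so the contraction is only needed on `[t₀ - 3K, t₀ + 3K]`. -/
theorem exists_ball_subset_of_contracting_steps {f g : ℝ → ℝ} {K q t₀ ε : ℝ} {H : Set ℝ}
    (hf_cont : Continuous f) (hg_cont : Continuous g)
    (hf : ∀ x, x < f x ∧ f x < x + 2 * K) (hg : ∀ x, x - 2 * K < g x ∧ g x < x)
    (hf_lip : ∀ x ∈ Icc (t₀ - 3 * K) (t₀ + 3 * K), ∀ y ∈ Icc (t₀ - 3 * K) (t₀ + 3 * K),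
      |f x - f y| ≤ q * |x - y|)
    (hg_lip : ∀ x ∈ Icc (t₀ - 3 * K) (t₀ + 3 * K), ∀ y ∈ Icc (t₀ - 3 * K) (t₀ + 3 * K),
      |g x - g y| ≤ q * |x - y|)
    (hq₀ : 0 < q) (hq₁ : q < 1) (hε : 0 < ε) (hH : ball t₀ ε ⊆ H)
    (hHf : ∀ x, f x ∈ H → x ∈ H) (hHg : ∀ x, g x ∈ H → x ∈ H) :
    ∃ t, ball t K ⊆ H := by
  have hK : 0 < K := by linarith [hf 0]
  have pullback : ∀ φ : ℝ → ℝ, (∀ x, φ x ∈ H → x ∈ H) →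
      (∀ x ∈ Icc (t₀ - 3 * K) (t₀ + 3 * K), ∀ y ∈ Icc (t₀ - 3 * K) (t₀ + 3 * K),
        |φ x - φ y| ≤ q * |x - y|) →
      ∀ x₀ r, |x₀ - t₀| ≤ 2 * K → r ≤ K → ball (φ x₀) (q * r) ⊆ H → ball x₀ r ⊆ H := by
    intro φ hHφ hφ x₀ r hx₀ hr hball x hx
    rw [mem_ball, Real.dist_eq] at hx
    have hx₀' := abs_le.1 hx₀
    have hx' := abs_lt.1 hx
    refine hHφ x (hball ?_)
    rw [mem_ball, Real.dist_eq]
    calc |φ x - φ x₀| ≤ q * |x - x₀| :=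
          hφ x ⟨by linarith, by linarith⟩ x₀ ⟨by linarith, by linarith⟩
      _ < q * r := mul_lt_mul_of_pos_left hx hq₀
  have step : ∀ t r, |t - t₀| ≤ 2 * K → r ≤ K → ball t (q * r) ⊆ H →
      ∃ t', |t' - t₀| ≤ 2 * K ∧ ball t' r ⊆ H := by
    intro t r ht hr hball
    have ht' := abs_le.1 ht
    rcases le_total t₀ t with htt₀ | htt₀
    · obtain ⟨x₀, ⟨hx₁, hx₂⟩, rfl⟩ := intermediate_value_Ioo (by linarith : t - 2 * K ≤ t)
        hf_cont.continuousOn ⟨by linarith [hf (t - 2 * K)], (hf t).1⟩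
      have hx₀ : |x₀ - t₀| ≤ 2 * K := abs_le.2 ⟨by linarith, by linarith [hf x₀]⟩
      exact ⟨x₀, hx₀, pullback f hHf hf_lip x₀ r hx₀ hr hball⟩
    · obtain ⟨x₀, ⟨hx₁, hx₂⟩, rfl⟩ := intermediate_value_Ioo (by linarith : t ≤ t + 2 * K)
        hg_cont.continuousOn ⟨(hg t).2, by linarith [hg (t + 2 * K)]⟩
      have hx₀ : |x₀ - t₀| ≤ 2 * K := abs_le.2 ⟨by linarith [hg x₀], by linarith⟩
      exact ⟨x₀, hx₀, pullback g hHg hg_lip x₀ r hx₀ hr hball⟩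
  have hiterate : ∀ k : ℕ, ∀ r ≤ K, q ^ k * r < ε → ∃ t, |t - t₀| ≤ 2 * K ∧ ball t r ⊆ H := by
    intro k
    induction k with
    | zero =>
      intro r _ hr
      rw [pow_zero, one_mul] at hr
      exact ⟨t₀, by simp [hK.le], (ball_subset_ball hr.le).trans hH⟩
    | succ k ih =>
      intro r hrK hr
      have hqr : q * r ≤ K := by rcases le_total 0 r with h | h <;> nlinarith
      obtain ⟨t, ht, hball⟩ := ih (q * r) hqr (by rwa [← mul_assoc, ← pow_succ])
      exact step t r ht hrK hball
  obtain ⟨k, hk⟩ := exists_pow_lt_of_lt_one (div_pos hε hK) hq₁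
  obtain ⟨t, -, ht⟩ := hiterate k K le_rfl (by rwa [lt_div_iff₀ hK] at hk)
  exact ⟨t, ht⟩

def eloStep (b : ℝ → ℝ) (K σ u : ℝ) : ℝ := u + K * (σ - b (2 * u))

section eloStep

variable {b : ℝ → ℝ} {K : ℝ}

theorem continuous_eloStep (hb : Continuous b) (σ : ℝ) : Continuous (eloStep b K σ) := by
  unfold eloStep
  fun_prop

theorem antitone_eloStep_sub_self (hb : Monotone b) (hK : 0 ≤ K) (σ : ℝ) :
    Antitone fun u => eloStep b K σ u - u := by
  intro u v huv
  have := mul_le_mul_of_nonneg_left (hb (by linarith : 2 * u ≤ 2 * v)) hK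
  simp only [eloStep]
  linarith

theorem eloStep_one_mem_Ioo (hb : ∀ u, b u ∈ Ioo (-1 : ℝ) 1) (hK : 0 < K) (u : ℝ) :
    u < eloStep b K 1 u ∧ eloStep b K 1 u < u + 2 * K := by
  obtain ⟨h₁, h₂⟩ := hb (2 * u)
  constructor <;> simp only [eloStep] <;> nlinarith

theorem eloStep_neg_one_mem_Ioo (hb : ∀ u, b u ∈ Ioo (-1 : ℝ) 1) (hK : 0 < K) (u : ℝ) :
    u - 2 * K < eloStep b K (-1) u ∧ eloStep b K (-1) u < u := by
  obtain ⟨h₁, h₂⟩ := hb (2 * u)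
  constructor <;> simp only [eloStep] <;> nlinarith

theorem abs_eloStep_sub_eloStep_le {L ℓ M : ℝ} (hb_mono : Monotone b)
    (hb_lip : ∀ u v, |b u - b v| ≤ L * |u - v|) (hK : 0 ≤ K)
    (hℓ : ∀ u ∈ Icc (-(2 * M)) (2 * M), ∀ v ∈ Icc (-(2 * M)) (2 * M), ℓ * |u - v| ≤ |b u - b v|)
    (σ : ℝ) {x y : ℝ} (hx : x ∈ Icc (-M) M) (hy : y ∈ Icc (-M) M) :
    |eloStep b K σ x - eloStep b K σ y| ≤ max (1 - 2 * K * ℓ) (2 * K * L - 1) * |x - y| := by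
  have hshift : eloStep b K σ x - eloStep b K σ y =
      (x - K * b (2 * x)) - (y - K * b (2 * y)) := by
    unfold eloStep
    ring
  rw [hshift]
  refine abs_sub_sub_sub_le_of_slope_bounds (f := fun x => K * b (2 * x)) ?_ hx hy
  intro x hx y hy hyx
  have h2 : |2 * x - 2 * y| = 2 * (x - y) := by
    rw [← mul_sub, abs_of_nonneg (by linarith)]
  have hb : |b (2 * x) - b (2 * y)| = b (2 * x) - b (2 * y) :=
    abs_of_nonneg (sub_nonneg.2 (hb_mono (by linarith)))
  have hlow := hℓ (2 * x) ⟨by linarith [hx.1], by linarith [hx.2]⟩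
    (2 * y) ⟨by linarith [hy.1], by linarith [hy.2]⟩
  have hup := hb_lip (2 * x) (2 * y)
  rw [h2, hb] at hlow hup
  constructor
  · nlinarith [mul_le_mul_of_nonneg_left hlow hK]
  · nlinarith [mul_le_mul_of_nonneg_left hup hK]

theorem exists_contraction_eloStep {L : ℝ} {ℓ : ℝ → ℝ} (hb_mono : Monotone b)
    (hb_lip : ∀ u v, |b u - b v| ≤ L * |u - v|) (hK : 0 < K) (hKL : K * L < 1)
    (hℓ_pos : ∀ M > 0, 0 < ℓ M)
    (hℓ_low : ∀ M > 0, ∀ u ∈ Icc (-M) M, ∀ v ∈ Icc (-M) M, ℓ M * |u - v| ≤ |b u - b v|)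
    (t₀ R : ℝ) :
    ∃ q, 0 < q ∧ q < 1 ∧ ∀ σ, ∀ x ∈ Icc (t₀ - R) (t₀ + R), ∀ y ∈ Icc (t₀ - R) (t₀ + R),
      |eloStep b K σ x - eloStep b K σ y| ≤ q * |x - y| := by
  set M := |t₀| + |R| + 1
  have hM : 0 < 2 * M := by positivity
  have hIcc : Icc (t₀ - R) (t₀ + R) ⊆ Icc (-M) M :=
    Icc_subset_Icc (by linarith [neg_abs_le t₀, le_abs_self R])
      (by linarith [le_abs_self t₀, le_abs_self R])
  refine ⟨max (max (1 - 2 * K * ℓ (2 * M)) (2 * K * L - 1)) (1 / 2), by positivity,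
    max_lt (max_lt (by nlinarith [hℓ_pos (2 * M) hM]) (by linarith)) (by norm_num), ?_⟩
  intro σ x hx y hy
  exact (abs_eloStep_sub_eloStep_le hb_mono hb_lip hK.le (hℓ_low (2 * M) hM) σ
    (hIcc hx) (hIcc hy)).trans (mul_le_mul_of_nonneg_right (le_max_left _ _) (abs_nonneg _))

end eloStep

theorem stmt_7_general (b : ℝ → ℝ) (hb_mono : StrictMono b)
    (hb_range : ∀ u, b u ∈ Set.Ioo (-1 : ℝ) 1)
    (L : ℝ) (hb_lip : ∀ u v, |b u - b v| ≤ L * |u - v|)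
    (K : ℝ) (hK : 0 < K) (hKL : K * L < 1)
    (ℓ : ℝ → ℝ) (hℓ_pos : ∀ M > 0, 0 < ℓ M)
    (hℓ_low : ∀ M > 0, ∀ u ∈ Set.Icc (-M) M, ∀ v ∈ Set.Icc (-M) M,
      ℓ M * |u - v| ≤ |b u - b v|)
    (Ep Em : ℝ → ℝ)
    (hEp : ∀ u, Ep u = u + K * (1 - b (2 * u)))
    (hEm : ∀ u, Em u = u + K * (-1 - b (2 * u)))
    (a c : ℝ) (hac : a < c) (u : ℝ) :
    ∃ l : List (ℝ → ℝ), (∀ f ∈ l, f = Em ∨ f = Ep) ∧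
      (l.foldr (· ∘ ·) id) u ∈ Set.Ioo a c := by
  obtain rfl : Ep = eloStep b K 1 := funext hEp
  obtain rfl : Em = eloStep b K (-1) := funext hEm
  have hb_cont : Continuous b :=
    (LipschitzWith.of_dist_le' (by simpa only [Real.dist_eq] using hb_lip)).continuous
  obtain ⟨q, hq₀, hq₁, hlip⟩ :=
    exists_contraction_eloStep hb_mono.monotone hb_lip hK hKL hℓ_pos hℓ_low ((a + c) / 2) (3 * K)
  set S := Submonoid.closure ({eloStep b K (-1), eloStep b K 1} : Set (Function.End ℝ))
  set H := {x | ∃ β ∈ S, β x ∈ Ioo a c}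
  have hH : ∀ φ ∈ ({eloStep b K (-1), eloStep b K 1} : Set (Function.End ℝ)),
      ∀ x, φ x ∈ H → x ∈ H := by
    rintro φ hφ x ⟨β, hβ, hβx⟩
    exact ⟨β * φ, S.mul_mem hβ (Submonoid.subset_closure hφ), hβx⟩
  have hHp := hH _ (Or.inr rfl)
  have hHm := hH _ (Or.inl rfl)
  have hball : ball ((a + c) / 2) ((c - a) / 2) ⊆ H := fun x hx => ⟨1, S.one_mem, by
      rw [Real.ball_eq_Ioo] at hx
      exact show x ∈ Ioo a c from ⟨by linarith [hx.1], by linarith [hx.2]⟩⟩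
  obtain ⟨t, ht⟩ := exists_ball_subset_of_contracting_steps (continuous_eloStep hb_cont 1)
    (continuous_eloStep hb_cont (-1)) (eloStep_one_mem_Ioo hb_range hK)
    (eloStep_neg_one_mem_Ioo hb_range hK) (hlip 1) (hlip (-1)) hq₀ hq₁
    (by linarith) hball hHp hHm
  have hH_univ := eq_univ_of_Ioo_subset_of_steps (lo := t - K) (hi := t + K)
    (antitone_eloStep_sub_self hb_mono.monotone hK.le 1)
    (antitone_eloStep_sub_self hb_mono.monotone hK.le (-1))
    (eloStep_one_mem_Ioo hb_range hK) (eloStep_neg_one_mem_Ioo hb_range hK)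
    (by linarith) (by rwa [← Real.ball_eq_Ioo]) hHp hHm
  obtain ⟨β, hβ, hβu⟩ : u ∈ H := hH_univ ▸ mem_univ u
  obtain ⟨l, hl, rfl⟩ := Submonoid.exists_list_of_mem_closure hβ
  -- `List.prod` in `Function.End ℝ` is definitionally `List.foldr (· ∘ ·) id`.
  exact ⟨l, hl, hβu⟩

theorem stmt_7 (b : ℝ → ℝ) (hb_mono : StrictMono b)
    (hb_range : ∀ u, b u ∈ Set.Ioo (-1 : ℝ) 1)
    (L : ℝ) (hL : 0 ≤ L) (hb_lip : ∀ u v, |b u - b v| ≤ L * |u - v|)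
    (K : ℝ) (hK : 0 < K) (hKL : K * L < 1)
    (ℓ : ℝ → ℝ) (hℓ_pos : ∀ M > 0, 0 < ℓ M)
    (hℓ_low : ∀ M > 0, ∀ u ∈ Set.Icc (-M) M, ∀ v ∈ Set.Icc (-M) M,
      ℓ M * |u - v| ≤ |b u - b v|)
    (Ep Em : ℝ → ℝ)
    (hEp : ∀ u, Ep u = u + K * (1 - b (2 * u)))
    (hEm : ∀ u, Em u = u + K * (-1 - b (2 * u)))
    (a c : ℝ) (hac : a < c) (u : ℝ) :
    ∃ l : List (ℝ → ℝ), (∀ f ∈ l, f = Em ∨ f = Ep) ∧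
      (l.foldr (· ∘ ·) id) u ∈ Set.Ioo a c :=
  stmt_7_general b hb_mono hb_range L hb_lip K hK hKL ℓ hℓ_pos hℓ_low Ep Em hEp hEm a c hac u
end

section
/- Let S and D be independent real random variables with S bounded, E[S] = b(δ) and E[b(D)] = b(δ) for a fixed real δ, where b : R → (−1,1) is increasing and measurable, and suppose D has the stationarity property D =(dist) D + 2K(S − b(D)) for some K > 0, with E[(D − δ)²] < ∞. Then E[|D − δ|·|b(D) − b(δ)|] = K·Var(b(D)) + K·Var(S), and in particular K·Var(S) ≤ E[|D − δ|·|b(D) − b(δ)|] ≤ 2K. -/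
open MeasureTheory ProbabilityTheory

/-!
Stationarity gives `Var D = Var (D + 2K(S - b D))`; expanding the right-hand side, the
cross terms `cov(D, S)` and `cov(S, b D)` vanish by independence, leaving
`cov(D, b D) = K (Var S + Var (b D))`. Since `b` is monotone, `(D - δ)(b D - b δ) ≥ 0`, and since
`E[b D] = b δ` its mean is exactly `cov(D, b D)`. The bounds follow from `0 ≤ Var` and
Popoviciu's inequality `Var ≤ 1` for variables with values in `[-1, 1]`.
-/

namespace ProbabilityTheory

variable {Ω : Type*} {mΩ : MeasurableSpace Ω} {μ : Measure Ω} {X Y : Ω → ℝ}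

theorem two_mul_covariance_eq_of_identDistrib_add [IsFiniteMeasure μ] {c : ℝ} (hc : c ≠ 0)
    (hX : MemLp X 2 μ) (hY : MemLp Y 2 μ)
    (h : IdentDistrib X (fun ω ↦ X ω + c * Y ω) μ μ) :
    2 * cov[X, Y; μ] = -c * Var[Y; μ] := by
  have hvar : Var[X; μ] = Var[X; μ] + 2 * (c * cov[X, Y; μ]) + c ^ 2 * Var[Y; μ] := by
    rw [← covariance_const_mul_right, ← variance_const_mul, ← variance_fun_add hX (hY.const_mul c)]
    exact h.variance_eq
  have : c * (2 * cov[X, Y; μ] + c * Var[Y; μ]) = 0 := by linear_combination -hvar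
  linear_combination (mul_eq_zero.1 this).resolve_left hc

theorem covariance_eq_integral_sub_mul_sub [IsProbabilityMeasure μ] (hX : MemLp X 2 μ)
    (hY : MemLp Y 2 μ) (a : ℝ) {m : ℝ} (hm : μ[Y] = m) :
    cov[X, Y; μ] = ∫ ω, (X ω - a) * (Y ω - m) ∂μ := by
  have hY_centered : ∫ ω, (Y ω - m) ∂μ = 0 := by
    rw [integral_sub (hY.integrable one_le_two) (integrable_const m), hm]
    simp
  rw [← covariance_sub_const_left (hX.integrable one_le_two) a,
    ← covariance_sub_const_right (hY.integrable one_le_two) m,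
    covariance_eq_sub (X := fun ω ↦ X ω - a) (Y := fun ω ↦ Y ω - m)
      (hX.sub (memLp_const a)) (hY.sub (memLp_const m))]
  simp only [hY_centered, mul_zero, sub_zero]
  rfl

theorem variance_le_one [IsProbabilityMeasure μ] (h : ∀ ω, X ω ∈ Set.Icc (-1 : ℝ) 1)
    (hX : AEMeasurable X μ) : Var[X; μ] ≤ 1 := by
  simpa using variance_le_sq_of_bounded (ae_of_all μ h) hX

end ProbabilityTheory

theorem Monotone.abs_sub_mul_abs_sub {α : Type*} [CommRing α] [LinearOrder α]
    [IsStrictOrderedRing α] {f : α → α} (hf : Monotone f) (x y : α) :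
    |x - y| * |f x - f y| = (x - y) * (f x - f y) := by
  rw [← abs_mul, abs_of_nonneg]
  simpa [mul_comm] using (monovary_id_iff.2 hf).sub_mul_sub_nonneg y x

theorem stmt_13_general {Ω : Type*} [MeasureSpace Ω] [IsProbabilityMeasure (ℙ : Measure Ω)]
    (S D : Ω → ℝ) (b : ℝ → ℝ) (δ K : ℝ) (hK : 0 < K)
    (hb_mono : Monotone b) (hb_meas : Measurable b)
    (hb_range : ∀ u, b u ∈ Set.Ioo (-1 : ℝ) 1)
    (hS_meas : Measurable S) (hD_meas : Measurable D)
    (hS_range : ∀ ω, S ω ∈ Set.Icc (-1 : ℝ) 1)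
    (hindep : IndepFun S D)
    (hEbD : ∫ ω, b (D ω) = b δ)
    (hstat : Measure.map D ℙ =
      Measure.map (fun ω => D ω + 2 * K * (S ω - b (D ω))) ℙ)
    (hL2 : Integrable (fun ω => (D ω - δ) ^ 2)) :
    (∫ ω, |D ω - δ| * |b (D ω) - b δ|) =
        K * variance (fun ω => b (D ω)) ℙ + K * variance S ℙ ∧
      K * variance S ℙ ≤ ∫ ω, |D ω - δ| * |b (D ω) - b δ| ∧
      (∫ ω, |D ω - δ| * |b (D ω) - b δ|) ≤ 2 * K := by
  have hbD_meas : Measurable fun ω ↦ b (D ω) := hb_meas.comp hD_meas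
  have hbD_range : ∀ ω, b (D ω) ∈ Set.Icc (-1 : ℝ) 1 := fun ω ↦ Set.Ioo_subset_Icc_self (hb_range _)
  have hS2 : MemLp S 2 := memLp_of_bounded (ae_of_all _ hS_range) hS_meas.aestronglyMeasurable 2
  have hbD2 : MemLp (fun ω ↦ b (D ω)) 2 :=
    memLp_of_bounded (ae_of_all _ hbD_range) hbD_meas.aestronglyMeasurable 2
  have hD2 : MemLp D 2 := by
    have := (memLp_two_iff_integrable_sq (by fun_prop)).2 hL2
    convert this.add (memLp_const δ) using 1
    ext; simp
  have hstat' : IdentDistrib D (fun ω ↦ D ω + 2 * K * (S ω - b (D ω))) :=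
    ⟨hD_meas.aemeasurable, by fun_prop, hstat⟩
  have hvar_stat :=
    two_mul_covariance_eq_of_identDistrib_add (by positivity) hD2 (hS2.sub hbD2) hstat'
  have hcov_sub : cov[D, S - fun ω ↦ b (D ω)] = -cov[D, fun ω ↦ b (D ω)] := by
    rw [covariance_sub_right hD2 hS2 hbD2, hindep.symm.covariance_eq_zero hD2 hS2, zero_sub]
  have hvar_sub : Var[S - fun ω ↦ b (D ω)] = Var[S] + Var[fun ω ↦ b (D ω)] := by
    have hcov_S_bD : cov[S, fun ω ↦ b (D ω)] = 0 :=
      (hindep.comp measurable_id hb_meas).covariance_eq_zero hS2 hbD2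
    rw [variance_sub hS2 hbD2, hcov_S_bD]
    ring
  have hcov_bD : cov[D, fun ω ↦ b (D ω)] = ∫ ω, |D ω - δ| * |b (D ω) - b δ| := by
    simp_rw [covariance_eq_integral_sub_mul_sub hD2 hbD2 δ hEbD, hb_mono.abs_sub_mul_abs_sub]
  have hmain : ∫ ω, |D ω - δ| * |b (D ω) - b δ| =
      K * variance (fun ω ↦ b (D ω)) ℙ + K * variance S ℙ := by
    rw [hcov_sub, hvar_sub, hcov_bD] at hvar_stat
    linear_combination (-1 / 2 : ℝ) * hvar_stat
  refine ⟨hmain, ?_, ?_⟩ <;> rw [hmain]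
  · nlinarith [variance_nonneg (fun ω ↦ b (D ω)) ℙ]
  · nlinarith [variance_le_one (μ := ℙ) hbD_range hbD_meas.aemeasurable,
      variance_le_one (μ := ℙ) hS_range hS_meas.aemeasurable]

theorem stmt_13 {Ω : Type*} [MeasureSpace Ω] [IsProbabilityMeasure (ℙ : Measure Ω)]
    (S D : Ω → ℝ) (b : ℝ → ℝ) (δ K : ℝ) (hK : 0 < K)
    (hb_mono : Monotone b) (hb_meas : Measurable b)
    (hb_range : ∀ u, b u ∈ Set.Ioo (-1 : ℝ) 1)
    (hS_meas : Measurable S) (hD_meas : Measurable D)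
    (hS_range : ∀ ω, S ω ∈ Set.Icc (-1 : ℝ) 1)
    (hindep : IndepFun S D)
    (hES : ∫ ω, S ω = b δ)
    (hEbD : ∫ ω, b (D ω) = b δ)
    (hstat : Measure.map D ℙ =
      Measure.map (fun ω => D ω + 2 * K * (S ω - b (D ω))) ℙ)
    (hL2 : Integrable (fun ω => (D ω - δ) ^ 2)) :
    (∫ ω, |D ω - δ| * |b (D ω) - b δ|) =
        K * variance (fun ω => b (D ω)) ℙ + K * variance S ℙ ∧
      K * variance S ℙ ≤ ∫ ω, |D ω - δ| * |b (D ω) - b δ| ∧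
      (∫ ω, |D ω - δ| * |b (D ω) - b δ|) ≤ 2 * K :=
  stmt_13_general S D b δ K hK hb_mono hb_meas hb_range hS_meas hD_meas hS_range hindep hEbD hstat
    hL2
end

section
/- Let D be a real random variable and δ ∈ R with E[|D − δ|·|b(D) − b(δ)|] ≤ 2K, where b : R → (−1,1) is increasing and satisfies: for every ε ∈ (0,1], if |u − δ| ≥ ε then |b(u) − b(δ)| ≥ ε·ℓ for a constant ℓ > 0. Then for all K ≤ ℓ/2: E[|D − δ|] ≤ √(8K/ℓ). -/
open MeasureTheory ProbabilityTheory

theorem stmt_14 {Ω : Type*} [MeasureSpace Ω] [IsProbabilityMeasure (ℙ : Measure Ω)]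
    (δ ℓ K : ℝ) (hℓ : 0 < ℓ) (hK : 0 < K)
    (D : Ω → ℝ) (hD_meas : Measurable D)
    (hD_int : Integrable (fun ω => |D ω - δ|))
    (b : ℝ → ℝ) (hb_mono : Monotone b)
    (hb_range : ∀ u, b u ∈ Set.Ioo (-1 : ℝ) 1)
    (hslope : ∀ ε ∈ Set.Ioc (0 : ℝ) 1, ∀ u : ℝ, ε ≤ |u - δ| → ε * ℓ ≤ |b u - b δ|)
    (hmain : (∫ ω, |D ω - δ| * |b (D ω) - b δ|) ≤ 2 * K)
    (hKℓ : K ≤ ℓ / 2) :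
    (∫ ω, |D ω - δ|) ≤ Real.sqrt (8 * K / ℓ) := by
  set ε := Real.sqrt (2 * K / ℓ) with hεdef
  have hpos : 0 < 2 * K / ℓ := by positivity
  have hε0 : 0 < ε := Real.sqrt_pos.mpr hpos
  have hεsq : ε ^ 2 = 2 * K / ℓ := Real.sq_sqrt hpos.le
  have hε1 : ε ≤ 1 := by
    rw [hεdef, show (1 : ℝ) = Real.sqrt 1 by simp]
    apply Real.sqrt_le_sqrt
    rw [div_le_one hℓ]; linarith
  have hb2 : ∀ u, |b u - b δ| ≤ 2 := by
    intro u
    have h1 := hb_range u; have h2 := hb_range δ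
    simp only [Set.mem_Ioo] at h1 h2
    rw [abs_le]; constructor <;> linarith [h1.1, h1.2, h2.1, h2.2]
  have hint : Integrable (fun ω => |D ω - δ| * |b (D ω) - b δ|) := by
    apply Integrable.mono (hD_int.const_mul 2)
    · exact ((hD_meas.sub_const δ).abs.mul
        (((hb_mono.measurable.comp hD_meas).sub_const (b δ)).abs)).aestronglyMeasurable
    · filter_upwards with ω
      simp only [Real.norm_eq_abs]
      rw [abs_of_nonneg (show (0:ℝ) ≤ |D ω - δ| * |b (D ω) - b δ| by positivity),
        abs_of_nonneg (show (0:ℝ) ≤ 2 * |D ω - δ| by positivity)]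
      nlinarith [abs_nonneg (D ω - δ), hb2 (D ω), abs_nonneg (b (D ω) - b δ)]
  have hεℓ : 0 < ε * ℓ := by positivity
  have hpt : ∀ ω, |D ω - δ| ≤ ε + |D ω - δ| * |b (D ω) - b δ| / (ε * ℓ) := by
    intro ω
    rcases lt_or_ge (|D ω - δ|) ε with h | h
    · have : 0 ≤ |D ω - δ| * |b (D ω) - b δ| / (ε * ℓ) := by positivity
      linarith
    · have hB := hslope ε ⟨hε0, hε1⟩ (D ω) h
      have : |D ω - δ| ≤ |D ω - δ| * |b (D ω) - b δ| / (ε * ℓ) := by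
        rw [le_div_iff₀ hεℓ]
        exact mul_le_mul_of_nonneg_left hB (abs_nonneg _)
      linarith
  have hgint : Integrable (fun ω => ε + |D ω - δ| * |b (D ω) - b δ| / (ε * ℓ)) :=
    (integrable_const ε).add (hint.div_const _)
  have hle : (∫ ω, |D ω - δ|) ≤ ∫ ω, (ε + |D ω - δ| * |b (D ω) - b δ| / (ε * ℓ)) :=
    integral_mono hD_int hgint hpt
  have heq : (∫ ω, (ε + |D ω - δ| * |b (D ω) - b δ| / (ε * ℓ)))
      = ε + (∫ ω, |D ω - δ| * |b (D ω) - b δ|) / (ε * ℓ) := by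
    rw [integral_add (integrable_const ε) (hint.div_const _), integral_const,
      integral_div]
    simp
  have hbound : (∫ ω, |D ω - δ|) ≤ ε + 2 * K / (ε * ℓ) := by
    rw [heq] at hle
    have : (∫ ω, |D ω - δ| * |b (D ω) - b δ|) / (ε * ℓ) ≤ 2 * K / (ε * ℓ) := by
      gcongr
    linarith
  have hkey : ε + 2 * K / (ε * ℓ) = 2 * ε := by
    have : 2 * K = ε ^ 2 * ℓ := by
      field_simp at hεsq; linarith [hεsq]
    rw [this]; field_simp; ring
  have hfin : 2 * ε = Real.sqrt (8 * K / ℓ) := by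
    rw [hεdef, show (8 : ℝ) * K / ℓ = 4 * (2 * K / ℓ) by ring,
      Real.sqrt_mul (by norm_num : (0:ℝ) ≤ 4),
      show Real.sqrt 4 = 2 by rw [show (4:ℝ) = 2 ^ 2 by norm_num, Real.sqrt_sq (by norm_num)]]
  rw [← hfin]
  linarith [hbound, hkey.le]
end

section
/- Let X and Y be integrable random vectors in R^N with Σ_i X^i = Σ_i Y^i almost surely (zero-sum difference), and let (I, J) be a uniformly random ordered pair of distinct indices in {1,…,N}, independent of (X, Y). Then E[|X − Y|₁] ≤ (N − 1)·E[|X^I − X^J − Y^I + Y^J|]. -/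
/-!
With `D = X - Y`, the triangle inequality applied to `N Dⁱ = ∑ⱼ (Dⁱ - Dʲ)` (valid since
`∑ⱼ Dʲ = 0`) gives `N |D|₁ ≤ ∑_{i,j} |Dⁱ - Dʲ|` pointwise. By independence,
`E|D^I - D^J|` is the uniform average of `E|Dⁱ - Dʲ|` over the `N(N-1)` off-diagonal pairs; the
diagonal terms vanish anyway, so `N(N-1) E|D^I - D^J| = ∑_{i,j} E|Dⁱ - Dʲ| ≥ N E|D|₁`.
-/

open MeasureTheory ProbabilityTheory

lemma card_mul_sum_abs_le_sum_abs_sub {ι : Type*} [Fintype ι] (d : ι → ℝ)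
    (hd : ∑ i, d i = 0) :
    Fintype.card ι * ∑ i, |d i| ≤ ∑ i, ∑ j, |d i - d j| := by
  rw [Finset.mul_sum]
  gcongr with i
  calc (Fintype.card ι : ℝ) * |d i| = |∑ j, (d i - d j)| := by
        simp [Finset.sum_sub_distrib, hd, abs_mul]
    _ ≤ ∑ j, |d i - d j| := Finset.abs_sum_le_sum_abs _ _

lemma ProbabilityTheory.IndepFun.integral_comp_eq_sum_measureReal_mul {Ω ι E : Type*}
    [MeasurableSpace Ω] {μ : Measure Ω} [Fintype ι] [MeasurableSpace ι]
    [MeasurableSingletonClass ι] [MeasurableSpace E] {K : Ω → ι} {Z : Ω → E}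
    (hK : Measurable K) (hKZ : IndepFun K Z μ)
    {g : ι → E → ℝ} (hg : ∀ i, Measurable (g i))
    (hgZ : ∀ i, Integrable (fun ω ↦ g i (Z ω)) μ) :
    ∫ ω, g (K ω) (Z ω) ∂μ = ∑ i, μ.real (K ⁻¹' {i}) * ∫ ω, g i (Z ω) ∂μ := by
  classical
  set φ : ι → ι → ℝ := fun i ↦ ({i} : Set ι).indicator 1
  have hφ : ∀ i, Measurable (φ i) := fun i ↦
    measurable_const.indicator (measurableSet_singleton i)
  have hsplit : ∀ ω, g (K ω) (Z ω) = ∑ i, φ i (K ω) * g i (Z ω) := by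
    intro ω
    simp [φ, Pi.single_apply]
  have hterm : ∀ i, ∫ ω, φ i (K ω) * g i (Z ω) ∂μ =
      μ.real (K ⁻¹' {i}) * ∫ ω, g i (Z ω) ∂μ := by
    intro i
    calc ∫ ω, φ i (K ω) * g i (Z ω) ∂μ
        = (∫ ω, φ i (K ω) ∂μ) * ∫ ω, g i (Z ω) ∂μ :=
          (hKZ.comp (hφ i) (hg i)).integral_fun_mul_eq_mul_integral
            ((hφ i).comp hK).aestronglyMeasurable (hgZ i).aestronglyMeasurable
      _ = μ.real (K ⁻¹' {i}) * ∫ ω, g i (Z ω) ∂μ := by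
          rw [← integral_indicator_one (hK (measurableSet_singleton i))]
          rfl
  have hint : ∀ i, Integrable (fun ω ↦ φ i (K ω) * g i (Z ω)) μ := fun i ↦
    (hgZ i).bdd_mul ((hφ i).comp hK).aestronglyMeasurable (c := 1)
      (.of_forall fun ω ↦ (norm_indicator_le_norm_self _ _).trans (by simp))
  simp_rw [hsplit]
  rw [integral_finsetSum _ fun i _ ↦ hint i]
  exact Finset.sum_congr rfl fun i _ ↦ hterm i

theorem integral_sum_abs_le_of_indepFun_uniform_offDiag {Ω ι : Type*} [MeasurableSpace Ω]
    {μ : Measure Ω} [Fintype ι] [MeasurableSpace ι] [MeasurableSingletonClass ι]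
    (hι : 2 ≤ Fintype.card ι) {D : Ω → ι → ℝ} (hD : Integrable D μ)
    (hzero : ∀ᵐ ω ∂μ, ∑ i, D ω i = 0) {IJ : Ω → ι × ι} (hIJ : Measurable IJ)
    (hunif : ∀ i j, i ≠ j → μ {ω | IJ ω = (i, j)} =
      1 / ((Fintype.card ι : ENNReal) * ((Fintype.card ι : ENNReal) - 1)))
    (hindep : IndepFun IJ D μ) :
    ∫ ω, ∑ i, |D ω i| ∂μ ≤
      ((Fintype.card ι : ℝ) - 1) * ∫ ω, |D ω (IJ ω).1 - D ω (IJ ω).2| ∂μ := by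
  set n : ℝ := (Fintype.card ι : ℝ)
  have hn : 1 < n := by unfold n; exact_mod_cast hι
  set g : ι × ι → (ι → ℝ) → ℝ := fun p d ↦ |d p.1 - d p.2|
  have hg : ∀ p, Measurable (g p) := fun p ↦ by fun_prop
  have hgD : ∀ p, Integrable (fun ω ↦ g p (D ω)) μ := fun p ↦
    ((hD.eval p.1).sub (hD.eval p.2)).abs
  set S := ∑ p, ∫ ω, g p (D ω) ∂μ
  have hmass : ∀ p : ι × ι, p.1 ≠ p.2 → μ.real (IJ ⁻¹' {p}) = 1 / (n * (n - 1)) := by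
    intro p hp
    have hp' : IJ ⁻¹' {p} = {ω | IJ ω = (p.1, p.2)} := rfl
    rw [measureReal_def, hp', hunif p.1 p.2 hp, ENNReal.toReal_div, ENNReal.toReal_mul,
      ENNReal.toReal_sub_of_le (by exact_mod_cast hι.trans' one_le_two) (by simp)]
    simp [n]
  have hRHS : ∫ ω, g (IJ ω) (D ω) ∂μ = S / (n * (n - 1)) := by
    rw [hindep.integral_comp_eq_sum_measureReal_mul hIJ hg hgD, Finset.sum_div]
    refine Finset.sum_congr rfl fun p _ ↦ ?_
    by_cases hp : p.1 = p.2
    · simp [g, hp]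
    · rw [hmass p hp]
      ring
  have hLHS : ∫ ω, ∑ i, |D ω i| ∂μ ≤ S / n := by
    calc ∫ ω, ∑ i, |D ω i| ∂μ ≤ ∫ ω, (∑ p, g p (D ω)) / n ∂μ := by
          refine integral_mono_ae (integrable_finsetSum _ fun i _ ↦ (hD.eval i).abs)
            ((integrable_finsetSum _ fun p _ ↦ hgD p).div_const n) ?_
          filter_upwards [hzero] with ω hω
          rw [le_div_iff₀ (by linarith), mul_comm, Fintype.sum_prod_type]
          exact card_mul_sum_abs_le_sum_abs_sub _ hω
      _ = S / n := by rw [integral_div, integral_finsetSum _ fun p _ ↦ hgD p]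
  calc _ ≤ S / n := hLHS
    _ = (n - 1) * (S / (n * (n - 1))) := by field_simp [(by linarith : n - 1 ≠ 0)]
    _ = _ := by rw [← hRHS]

theorem stmt_15_general {Ω : Type*} [MeasureSpace Ω]
    (N : ℕ) (hN : 2 ≤ N)
    (X Y : Ω → (Fin N → ℝ))
    (hX_int : Integrable X) (hY_int : Integrable Y)
    (hzero : ∀ᵐ ω ∂ℙ, ∑ i, (X ω i - Y ω i) = 0)
    (IJ : Ω → Fin N × Fin N) (hIJ_meas : Measurable IJ)
    (hIJ_unif : ∀ i j : Fin N, i ≠ j →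
      ℙ {ω | IJ ω = (i, j)} = 1 / ((N : ENNReal) * ((N : ENNReal) - 1)))
    (hindep : IndepFun IJ (fun ω => (X ω, Y ω))) :
    (∫ ω, ∑ i, |X ω i - Y ω i|) ≤
      ((N : ℝ) - 1) *
        ∫ ω, |X ω (IJ ω).1 - X ω (IJ ω).2 - Y ω (IJ ω).1 + Y ω (IJ ω).2| := by
  have hD_indep : IndepFun IJ (X - Y) :=
    hindep.comp measurable_id (measurable_fst.sub measurable_snd)
  have hD := integral_sum_abs_le_of_indepFun_uniform_offDiag (by simpa using hN)
    (hX_int.sub hY_int) hzero hIJ_meas (by simpa using hIJ_unif) hD_indep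
  have hpair : ∀ ω, (X - Y) ω (IJ ω).1 - (X - Y) ω (IJ ω).2 =
      X ω (IJ ω).1 - X ω (IJ ω).2 - Y ω (IJ ω).1 + Y ω (IJ ω).2 := fun ω ↦ by
    simp only [Pi.sub_apply]
    ring
  simp only [Fintype.card_fin, hpair] at hD
  exact hD

theorem stmt_15 {Ω : Type*} [MeasureSpace Ω] [IsProbabilityMeasure (ℙ : Measure Ω)]
    (N : ℕ) (hN : 2 ≤ N)
    (X Y : Ω → (Fin N → ℝ)) (hX_meas : Measurable X) (hY_meas : Measurable Y)
    (hX_int : Integrable X) (hY_int : Integrable Y)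
    (hzero : ∀ᵐ ω ∂ℙ, ∑ i, (X ω i - Y ω i) = 0)
    (IJ : Ω → Fin N × Fin N) (hIJ_meas : Measurable IJ)
    (hIJ_unif : ∀ i j : Fin N, i ≠ j →
      ℙ {ω | IJ ω = (i, j)} = 1 / ((N : ENNReal) * ((N : ENNReal) - 1)))
    (hIJ_distinct : ∀ᵐ ω ∂ℙ, (IJ ω).1 ≠ (IJ ω).2)
    (hindep : IndepFun IJ (fun ω => (X ω, Y ω))) :
    (∫ ω, ∑ i, |X ω i - Y ω i|) ≤
      ((N : ℝ) - 1) *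
        ∫ ω, |X ω (IJ ω).1 - X ω (IJ ω).2 - Y ω (IJ ω).1 + Y ω (IJ ω).2| :=
  stmt_15_general N hN X Y hX_int hY_int hzero IJ hIJ_meas hIJ_unif hindep
end

section
/- Let μ be a probability measure on R^N that is stationary for the Elo Markov chain, i.e. X =(dist) X + K(S^{IJ} − b(X^I − X^J))(e_I − e_J), where (I,J) is a uniform ordered pair of distinct indices independent of X, and conditionally on (I,J) = (i,j) the score S^{ij} is independent of X with E[S^{ij}] = b(ρ^i − ρ^j). Assume b : R → (−1,1) is odd and measurable, and X is integrable. Then for every index i: E[Σ_{j ≠ i} b(X^i − X^j)] = Σ_{j ≠ i} b(ρ^i − ρ^j). -/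
/-!
Stationarity says that the Elo increment `K (S^{IJ} - b(X^I - X^J)) (e_I - e_J)` has mean zero.
Since `(I, J)` is uniform and independent of the ratings and scores, the `i`-th coordinate of
that mean is `c K ∑_{k ≠ i} [(E S^{ik} - E b(X^i - X^k)) - (E S^{ki} - E b(X^k - X^i))]` with
`c = 1 / (N (N - 1))`. Antisymmetry of the scores and oddness of `b` turn each bracket into
`2 (b(ρ^i - ρ^k) - E b(X^i - X^k))`, and `c K ≠ 0`.
-/

open MeasureTheory ProbabilityTheory Finset
open scoped ENNReal

theorem ProbabilityTheory.IdentDistrib.integral_eq_zero_of_add {Ω E : Type*}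
    {mΩ : MeasurableSpace Ω} {μ : Measure Ω} [NormedAddCommGroup E] [NormedSpace ℝ E]
    [MeasurableSpace E] [BorelSpace E] {X D : Ω → E}
    (h : IdentDistrib X (fun ω => X ω + D ω) μ μ) (hX : Integrable X μ) (hD : Integrable D μ) :
    ∫ ω, D ω ∂μ = 0 := by
  simpa [integral_add hX hD] using h.integral_eq.symm

section FiniteValued

variable {Ω α : Type*} [Fintype α] {A : Ω → α}

theorem eq_sum_indicator_fibers (G : α → Ω → ℝ) (ω : Ω) :
    G (A ω) ω = ∑ a, {ω | A ω = a}.indicator (G a) ω := by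
  classical
  simp [Set.indicator_apply]

variable {mΩ : MeasurableSpace Ω} {μ : Measure Ω} [MeasurableSpace α] [MeasurableSingletonClass α]

theorem integrable_comp_of_fintype (hA : Measurable A) {G : α → Ω → ℝ}
    (hG : ∀ a, Integrable (G a) μ) : Integrable (fun ω => G (A ω) ω) μ := by
  simp_rw [eq_sum_indicator_fibers G]
  exact integrable_finsetSum _ fun a _ => (hG a).indicator (hA (measurableSet_singleton a))

theorem integral_comp_eq_sum_of_indepFun {β : Type*} [MeasurableSpace β] {Z : Ω → β}
    (hA : Measurable A) (hZ : AEMeasurable Z μ) (hAZ : IndepFun A Z μ) {F : α → β → ℝ}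
    (hF : ∀ a, AEStronglyMeasurable (F a) (μ.map Z))
    (hF_int : ∀ a, Integrable (fun ω => F a (Z ω)) μ) :
    ∫ ω, F (A ω) (Z ω) ∂μ = ∑ a, μ.real {ω | A ω = a} * ∫ ω, F a (Z ω) ∂μ := by
  classical
  simp_rw [eq_sum_indicator_fibers (fun a ω => F a (Z ω))]
  refine (integral_finsetSum _ fun a _ =>
    (hF_int a).indicator (hA (measurableSet_singleton a))).trans (sum_congr rfl fun a _ => ?_)
  have hindep := hAZ.integral_fun_comp_mul_comp hA.aemeasurable hZ
    (measurable_of_countable fun a' : α => if a' = a then (1 : ℝ) else 0).aestronglyMeasurable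
    (hF a)
  calc ∫ ω, {ω | A ω = a}.indicator (fun ω => F a (Z ω)) ω ∂μ
      = ∫ ω, (if A ω = a then 1 else 0) * F a (Z ω) ∂μ := by simp [Set.indicator_apply]
    _ = μ.real {ω | A ω = a} * ∫ ω, F a (Z ω) ∂μ := by
      rw [hindep, ← integral_indicator_one (s := {ω | A ω = a}) (hA (measurableSet_singleton a))]
      simp [Set.indicator_apply]

end FiniteValued

theorem integral_eq_neg_of_map_eq_map_neg {Ω : Type*} {mΩ : MeasurableSpace Ω} {μ : Measure Ω}
    {Y Z : Ω → ℝ} (hY : AEMeasurable Y μ) (hZ : AEMeasurable Z μ)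
    (h : μ.map Y = μ.map (fun ω => -Z ω)) : ∫ ω, Y ω ∂μ = -∫ ω, Z ω ∂μ :=
  (IdentDistrib.mk hY hZ.neg h).integral_eq.trans (integral_neg _)

theorem integral_elo_gain_swap {Ω ι : Type*} {mΩ : MeasurableSpace Ω} {μ : Measure Ω}
    {K : ℝ} {b : ℝ → ℝ} (hb_odd : ∀ u, b (-u) = -b u) {X : Ω → ι → ℝ} {S : ι → ι → Ω → ℝ}
    {i k : ι} (hS_sym : μ.map (S k i) = μ.map (fun ω => -S i k ω))
    (hS_ik : Integrable (S i k) μ) (hS_ki : Integrable (S k i) μ)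
    (hb_ik : Integrable (fun ω => b (X ω i - X ω k)) μ) :
    ∫ ω, K * (S k i ω - b (X ω k - X ω i)) ∂μ = -∫ ω, K * (S i k ω - b (X ω i - X ω k)) ∂μ := by
  have hb_ki : ∀ ω, b (X ω k - X ω i) = -b (X ω i - X ω k) := fun ω => by
    rw [← hb_odd, neg_sub]
  simp_rw [hb_ki, sub_neg_eq_add]
  rw [integral_const_mul, integral_const_mul, integral_add hS_ki hb_ik,
    integral_sub hS_ik hb_ik,
    integral_eq_neg_of_map_eq_map_neg hS_ki.aemeasurable hS_ik.aemeasurable hS_sym]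
  ring

theorem ENNReal.toReal_one_div_natCast_mul_sub_one_ne_zero {n : ℕ} (hn : 2 ≤ n) :
    (1 / ((n : ℝ≥0∞) * ((n : ℝ≥0∞) - 1))).toReal ≠ 0 := by
  have h1 : (1 : ℝ≥0∞) < n := by exact_mod_cast hn
  have hpos : (n : ℝ≥0∞) * (n - 1) ≠ 0 :=
    mul_ne_zero (zero_lt_one.trans h1).ne' (tsub_pos_of_lt h1).ne'
  have hfin : (n : ℝ≥0∞) * (n - 1) ≠ ∞ :=
    mul_ne_top (natCast_ne_top n) (sub_ne_top (natCast_ne_top n))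
  exact toReal_ne_zero.2 ⟨ENNReal.div_ne_zero.2 ⟨one_ne_zero, hfin⟩, div_ne_top one_ne_top hpos⟩

theorem sum_mul_single_sub_single {ι R : Type*} [Fintype ι] [DecidableEq ι] [Ring R]
    (h : ι × ι → R) (i : ι) :
    ∑ p : ι × ι, h p * (Pi.single p.1 1 - Pi.single p.2 1 : ι → R) i =
      ∑ k ∈ univ.erase i, (h (i, k) - h (k, i)) := by
  simp only [Pi.sub_apply, Pi.single_apply, mul_sub, mul_ite, mul_one, mul_zero, sum_sub_distrib,
    Fintype.sum_prod_type]
  rw [sum_comm (f := fun x y => if i = x then h (x, y) else 0)]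
  simp only [sum_ite_eq, mem_univ, if_true]
  rw [← sum_sub_distrib, ← sum_erase_add _ _ (mem_univ i), sub_self, add_zero, sum_sub_distrib]

theorem stmt_18_general {Ω : Type*} [MeasureSpace Ω] [IsProbabilityMeasure (ℙ : Measure Ω)]
    (N : ℕ) (hN : 2 ≤ N) (ρ : Fin N → ℝ) (K : ℝ) (hK : 0 < K)
    (b : ℝ → ℝ) (hb_meas : Measurable b) (hb_odd : ∀ u, b (-u) = -b u)
    (hb_range : ∀ u, b u ∈ Set.Ioo (-1 : ℝ) 1)
    (X : Ω → (Fin N → ℝ)) (hX_meas : Measurable X) (hX_int : Integrable X)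
    (S : Fin N → Fin N → Ω → ℝ) (hS_meas : ∀ i j, Measurable (S i j))
    (hS_range : ∀ i j ω, S i j ω ∈ Set.Icc (-1 : ℝ) 1)
    (hS_mean : ∀ i j : Fin N, i ≠ j → (∫ ω, S i j ω) = b (ρ i - ρ j))
    (hS_sym : ∀ i j : Fin N, i ≠ j →
      Measure.map (S j i) ℙ = Measure.map (fun ω => -(S i j ω)) ℙ)
    (IJ : Ω → Fin N × Fin N) (hIJ_meas : Measurable IJ)
    (hIJ_unif : ∀ i j : Fin N, i ≠ j →
      ℙ {ω | IJ ω = (i, j)} = 1 / ((N : ENNReal) * ((N : ENNReal) - 1)))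
    (hIJ_indep : IndepFun IJ (fun ω => (X ω, fun i j => S i j ω)))
    (hstat : Measure.map X ℙ = Measure.map (fun ω =>
      X ω + (K * (S (IJ ω).1 (IJ ω).2 ω - b (X ω (IJ ω).1 - X ω (IJ ω).2))) •
        (Pi.single (IJ ω).1 (1 : ℝ) - Pi.single (IJ ω).2 (1 : ℝ))) ℙ) :
    ∀ i : Fin N,
      (∫ ω, ∑ j ∈ Finset.univ.erase i, b (X ω i - X ω j)) =
        ∑ j ∈ Finset.univ.erase i, b (ρ i - ρ j) := by
  intro i
  have hS_int : ∀ j k, Integrable (S j k) := fun j k =>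
    .of_mem_Icc (-1) 1 (hS_meas j k).aemeasurable (ae_of_all _ (hS_range j k))
  have hb_int : ∀ j k, Integrable fun ω => b (X ω j - X ω k) := fun j k =>
    .of_mem_Icc (-1) 1 (hb_meas.comp (by fun_prop)).aemeasurable
      (ae_of_all _ fun ω => Set.Ioo_subset_Icc_self (hb_range _))
  set F : Fin N × Fin N → (Fin N → ℝ) × (Fin N → Fin N → ℝ) → ℝ := fun p z =>
    K * (z.2 p.1 p.2 - b (z.1 p.1 - z.1 p.2)) * (Pi.single p.1 1 - Pi.single p.2 1 : Fin N → ℝ) i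
  have hF_int : ∀ p, Integrable fun ω => F p (X ω, fun j k => S j k ω) := fun p =>
    (((hS_int _ _).sub (hb_int _ _)).const_mul K).mul_const _
  -- `Measure.map` of a non-AE-measurable function is `0`, so `hstat` forces AE-measurability.
  have hlaw : IdentDistrib X _ ℙ ℙ := ⟨hX_meas.aemeasurable, .of_map_ne_zero (hstat ▸
    (Measure.map_ne_zero_iff hX_meas.aemeasurable).2 (IsProbabilityMeasure.ne_zero _)), hstat⟩
  have hdrift := (integral_comp_eq_sum_of_indepFun hIJ_meas (by fun_prop) hIJ_indep
    (fun p => (by fun_prop : Measurable (F p)).aestronglyMeasurable) hF_int).symm.trans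
    ((hlaw.comp (measurable_pi_apply i)).integral_eq_zero_of_add (hX_int.eval i)
      (integrable_comp_of_fintype hIJ_meas hF_int))
  simp only [F, integral_mul_const, ← mul_assoc] at hdrift
  rw [sum_mul_single_sub_single] at hdrift
  have hpair : ∀ k ∈ univ.erase i,
      ((ℙ : Measure Ω).real {ω | IJ ω = (i, k)} * ∫ ω, K * (S i k ω - b (X ω i - X ω k))) -
        (ℙ : Measure Ω).real {ω | IJ ω = (k, i)} * ∫ ω, K * (S k i ω - b (X ω k - X ω i)) =
      2 * (1 / ((N : ℝ≥0∞) * ((N : ℝ≥0∞) - 1))).toReal * K *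
        (b (ρ i - ρ k) - ∫ ω, b (X ω i - X ω k)) := by
    intro k hk
    have hik : i ≠ k := (ne_of_mem_erase hk).symm
    rw [measureReal_def, measureReal_def, hIJ_unif i k hik, hIJ_unif k i hik.symm,
      integral_elo_gain_swap hb_odd (hS_sym i k hik) (hS_int i k) (hS_int k i) (hb_int i k),
      integral_const_mul, integral_sub (hS_int i k) (hb_int i k), hS_mean i k hik]
    ring
  rw [sum_congr rfl hpair, ← mul_sum, mul_eq_zero, sum_sub_distrib, sub_eq_zero] at hdrift
  rw [integral_finsetSum _ fun j _ => hb_int i j]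
  exact (hdrift.resolve_left (mul_ne_zero (mul_ne_zero two_ne_zero
    (ENNReal.toReal_one_div_natCast_mul_sub_one_ne_zero hN)) hK.ne')).symm

theorem stmt_18 {Ω : Type*} [MeasureSpace Ω] [IsProbabilityMeasure (ℙ : Measure Ω)]
    (N : ℕ) (hN : 2 ≤ N) (ρ : Fin N → ℝ) (K : ℝ) (hK : 0 < K)
    (b : ℝ → ℝ) (hb_meas : Measurable b) (hb_odd : ∀ u, b (-u) = -b u)
    (hb_mono : Monotone b) (hb_range : ∀ u, b u ∈ Set.Ioo (-1 : ℝ) 1)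
    (X : Ω → (Fin N → ℝ)) (hX_meas : Measurable X) (hX_int : Integrable X)
    (S : Fin N → Fin N → Ω → ℝ) (hS_meas : ∀ i j, Measurable (S i j))
    (hS_range : ∀ i j ω, S i j ω ∈ Set.Icc (-1 : ℝ) 1)
    (hS_mean : ∀ i j : Fin N, i ≠ j → (∫ ω, S i j ω) = b (ρ i - ρ j))
    (hS_sym : ∀ i j : Fin N, i ≠ j →
      Measure.map (S j i) ℙ = Measure.map (fun ω => -(S i j ω)) ℙ)
    (hS_indepX : ∀ i j : Fin N, i ≠ j → IndepFun (S i j) X)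
    (IJ : Ω → Fin N × Fin N) (hIJ_meas : Measurable IJ)
    (hIJ_unif : ∀ i j : Fin N, i ≠ j →
      ℙ {ω | IJ ω = (i, j)} = 1 / ((N : ENNReal) * ((N : ENNReal) - 1)))
    (hIJ_distinct : ∀ᵐ ω ∂ℙ, (IJ ω).1 ≠ (IJ ω).2)
    (hIJ_indep : IndepFun IJ (fun ω => (X ω, fun i j => S i j ω)))
    (hstat : Measure.map X ℙ = Measure.map (fun ω =>
      X ω + (K * (S (IJ ω).1 (IJ ω).2 ω - b (X ω (IJ ω).1 - X ω (IJ ω).2))) •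
        (Pi.single (IJ ω).1 (1 : ℝ) - Pi.single (IJ ω).2 (1 : ℝ))) ℙ) :
    ∀ i : Fin N,
      (∫ ω, ∑ j ∈ Finset.univ.erase i, b (X ω i - X ω j)) =
        ∑ j ∈ Finset.univ.erase i, b (ρ i - ρ j) :=
  stmt_18_general N hN ρ K hK b hb_meas hb_odd hb_range X hX_meas hX_int S hS_meas hS_range hS_mean
    hS_sym IJ hIJ_meas hIJ_unif hIJ_indep hstat
end
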